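/- Let H be a graph in which every vertex has degree at least s except exactly one vertex of degree s−1. Then for every n ≥ 2s−1, ex(n, H, M_s) = max{ N(H, H(n,2s−1,s−1)), N(H, K_{2s−1}) }. -/

import Mathlib

open SimpleGraph Filter Finset

section Defs

variable {α β γ V : Type*}

/-- `H` has a copy in `G` (an injective edge-preserving map). -/
def Contains (H : SimpleGraph α) (G : SimpleGraph β) : Prop :=
  ∃ f : α ↪ β, ∀ a b, H.Adj a b → G.Adj (f a) (f b)

/-- `G` is `F`-free: it contains no copy of `F`. -/
def Free (F : SimpleGraph γ) (G : SimpleGraph β) : Prop := ¬ Contains F G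

/-- `N(H,G)`: the number of copies of `H` in `G`, i.e. subgraphs of `G` isomorphic to `H`. -/
noncomputable def copyCount (H : SimpleGraph α) (G : SimpleGraph β) : ℕ :=
  Set.ncard {G' : G.Subgraph | Nonempty (H ≃g G'.coe)}

/-- The generalized Turán number `ex(n,H,F)`. -/
noncomputable def exCount {α γ : Type*} (n : ℕ) (H : SimpleGraph α) (F : SimpleGraph γ) : ℕ :=
  sSup {N | ∃ G : SimpleGraph (Fin n), _root_.Free F G ∧ N = _root_.copyCount H G}

/-- The Turán number `ex(n,F)`. -/
noncomputable def exEdge {γ : Type*} (n : ℕ) (F : SimpleGraph γ) : ℕ :=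
  sSup {N | ∃ G : SimpleGraph (Fin n), _root_.Free F G ∧ N = G.edgeSet.ncard}

/-- The matching `M_t` with `t` independent edges. -/
def matchingGraph (t : ℕ) : SimpleGraph (Fin t × Fin 2) :=
  SimpleGraph.fromRel (fun a b => a.1 = b.1)

/-- Disjoint union of two graphs. -/
def disjUnion (G : SimpleGraph α) (H : SimpleGraph β) : SimpleGraph (α ⊕ β) :=
  SimpleGraph.fromRel (fun x y =>
    (∃ a b, x = Sum.inl a ∧ y = Sum.inl b ∧ G.Adj a b) ∨
    (∃ a b, x = Sum.inr a ∧ y = Sum.inr b ∧ H.Adj a b))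

/-- `a` vertex-disjoint copies of the clique `K_m`. -/
def multiClique (a m : ℕ) : SimpleGraph (Fin a × Fin m) :=
  SimpleGraph.fromRel (fun x y => x.1 = y.1)

/-- `H(n,2a+1,a)`: a clique on the first `a` vertices completely joined to the
remaining `n-a` independent vertices. -/
def splitGraph (n a : ℕ) : SimpleGraph (Fin n) :=
  SimpleGraph.fromRel (fun x y => (x : ℕ) < a)

/-- Degree of a vertex. -/
noncomputable def deg (G : SimpleGraph V) (v : V) : ℕ := (G.neighborSet v).ncard

end Defs

instance subFin {V : Type*} [Finite V] (G : SimpleGraph V) : Finite G.Subgraph := by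
  have : Finite (Set V × (V → V → Prop)) := by infer_instance
  exact Finite.of_injective (fun G' : G.Subgraph => (G'.verts, G'.Adj))
    (by rintro ⟨⟩ ⟨⟩ h; simp only [Prod.mk.injEq] at h; ext <;> simp [h.1, h.2])

lemma copyCount_mono {α β1 β2 : Type*} [Finite β2] (H : SimpleGraph α) {G1 : SimpleGraph β1}
    {G2 : SimpleGraph β2} (f : β1 → β2) (hinj : Function.Injective f)
    (hadj : ∀ a b, G1.Adj a b → G2.Adj (f a) (f b)) : _root_.copyCount H G1 ≤ _root_.copyCount H G2 := by
  classical
  let fh : G1 →g G2 := ⟨f, fun h => hadj _ _ h⟩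
  apply Set.ncard_le_ncard_of_injOn (SimpleGraph.Subgraph.map fh)
  · rintro G' ⟨φ⟩
    let e : ↥G'.verts ≃ ↥((SimpleGraph.Subgraph.map fh G').verts) :=
      Equiv.Set.imageOfInjOn f G'.verts hinj.injOn
    refine ⟨RelIso.trans φ (RelIso.mk e ?_)⟩
    have hev : ∀ (a : ↥G'.verts), ((e a : ↥((SimpleGraph.Subgraph.map fh G').verts)) : β2) = f a :=
      fun a => rfl
    rintro ⟨a, ha⟩ ⟨b, hb⟩
    show (SimpleGraph.Subgraph.map fh G').coe.Adj (e ⟨a, ha⟩) (e ⟨b, hb⟩) ↔ G'.coe.Adj ⟨a, ha⟩ ⟨b, hb⟩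
    rw [SimpleGraph.Subgraph.coe_adj, SimpleGraph.Subgraph.coe_adj, hev, hev]
    simp only [SimpleGraph.Subgraph.map_adj, Relation.Map]
    constructor
    · rintro ⟨a', b', hab, h1, h2⟩
      rwa [hinj h1, hinj h2] at hab
    · intro h; exact ⟨a, b, h, rfl, rfl⟩
  · intro G1' _ G2' _ h
    have hv : G1'.verts = G2'.verts := by
      have := congrArg SimpleGraph.Subgraph.verts h
      have h2 : f '' G1'.verts = f '' G2'.verts := this
      exact Set.image_injective.mpr hinj h2
    have ha : G1'.Adj = G2'.Adj := by
      have := congrArg SimpleGraph.Subgraph.Adj h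
      funext a b
      show G1'.Adj a b = G2'.Adj a b
      rw [eq_iff_iff]
      have h2 := congrFun (congrFun this (f a)) (f b)
      simp only [SimpleGraph.Subgraph.map_adj, Relation.Map, eq_iff_iff] at h2
      constructor
      · intro hx
        obtain ⟨a', b', hab, h1', h2'⟩ := h2.1 ⟨a, b, hx, rfl, rfl⟩
        rwa [hinj h1', hinj h2'] at hab
      · intro hx
        obtain ⟨a', b', hab, h1', h2'⟩ := h2.2 ⟨a, b, hx, rfl, rfl⟩
        rwa [hinj h1', hinj h2'] at hab
    exact SimpleGraph.Subgraph.ext hv ha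
def IsMat {n : ℕ} (G : SimpleGraph (Fin n)) (M : Finset (Fin n × Fin n)) : Prop :=
  (∀ p ∈ M, G.Adj p.1 p.2) ∧
  ∀ p ∈ M, ∀ q ∈ M, p ≠ q → p.1 ≠ q.1 ∧ p.1 ≠ q.2 ∧ p.2 ≠ q.1 ∧ p.2 ≠ q.2

lemma mat_subset {n : ℕ} {G : SimpleGraph (Fin n)} {M M' : Finset (Fin n × Fin n)}
    (hM : IsMat G M) (hsub : M' ⊆ M) : IsMat G M' :=
  ⟨fun p hp => hM.1 p (hsub hp), fun p hp q hq hne => hM.2 p (hsub hp) q (hsub hq) hne⟩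

lemma mat_insert {n : ℕ} {G : SimpleGraph (Fin n)} {M : Finset (Fin n × Fin n)} {x y : Fin n}
    (hM : IsMat G M) (hxy : G.Adj x y)
    (hx : ∀ p ∈ M, x ≠ p.1 ∧ x ≠ p.2) (hy : ∀ p ∈ M, y ≠ p.1 ∧ y ≠ p.2) :
    IsMat G (insert (x, y) M) ∧ (insert (x, y) M).card = M.card + 1 := by
  classical
  have hnotin : (x, y) ∉ M := fun hmem => (hx _ hmem).1 rfl
  refine ⟨⟨?_, ?_⟩, Finset.card_insert_of_notMem hnotin⟩
  · intro p hp
    rcases Finset.mem_insert.mp hp with h | h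
    · rw [h]; exact hxy
    · exact hM.1 p h
  · intro p hp q hq hne
    rcases Finset.mem_insert.mp hp with h1 | h1 <;> rcases Finset.mem_insert.mp hq with h2 | h2
    · exact absurd (h1.trans h2.symm) hne
    · subst h1
      exact ⟨(hx q h2).1, (hx q h2).2, (hy q h2).1, (hy q h2).2⟩
    · subst h2
      exact ⟨((hx p h1).1).symm, ((hy p h1).1).symm, ((hx p h1).2).symm, ((hy p h1).2).symm⟩
    · exact hM.2 p h1 q h2 hne
lemma contains_of_mat {n s : ℕ} {G : SimpleGraph (Fin n)} {M : Finset (Fin n × Fin n)}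
    (hM : IsMat G M) (hcard : s ≤ M.card) : Contains (matchingGraph s) G := by
  classical
  obtain ⟨M', hsub, hc⟩ := Finset.exists_subset_card_eq hcard
  let e : Fin s ≃ M' := (M'.equivFinOfCardEq hc).symm
  let f : Fin s × Fin 2 → Fin n := fun x => if x.2 = 0 then (e x.1 : Fin n × Fin n).1
    else (e x.1 : Fin n × Fin n).2
  have hadj : ∀ p ∈ M, G.Adj p.1 p.2 := hM.1
  have hne : ∀ p ∈ M, p.1 ≠ p.2 := fun p hp => (hadj p hp).ne
  have hdisj := hM.2
  have hmem : ∀ i : Fin s, (e i : Fin n × Fin n) ∈ M := fun i => hsub (e i).2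
  have hfinj : Function.Injective f := by
    rintro ⟨i, j⟩ ⟨i', j'⟩ h
    by_cases hii : i = i'
    · subst hii
      by_cases hjj : j = j'
      · rw [hjj]
      · exfalso
        simp only [f] at h
        by_cases h0 : j = 0
        · have h1 : j' ≠ 0 := fun hh => hjj (h0.trans hh.symm)
          rw [if_pos h0, if_neg h1] at h
          exact hne _ (hmem i) h
        · by_cases h1 : j' = 0
          · rw [if_neg h0, if_pos h1] at h
            exact hne _ (hmem i) h.symm
          · exact hjj (by omega)
    · exfalso
      have hee : (e i : Fin n × Fin n) ≠ (e i' : Fin n × Fin n) := by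
        intro hh
        exact hii (e.injective (Subtype.ext hh))
      have hd := hdisj _ (hmem i) _ (hmem i') hee
      simp only [f] at h
      by_cases h0 : j = 0 <;> by_cases h1 : j' = 0 <;>
        simp only [if_pos, if_neg, h0, h1, if_true] at h <;> simp_all
  refine ⟨⟨f, hfinj⟩, ?_⟩
  rintro ⟨i, j⟩ ⟨i', j'⟩ hab
  have hab' : (⟨i, j⟩ : Fin s × Fin 2) ≠ ⟨i', j'⟩ ∧ i = i' := by
    have := hab
    simp only [matchingGraph, SimpleGraph.fromRel_adj] at this
    exact ⟨this.1, by rcases this.2 with h | h; exacts [h, h.symm]⟩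
  obtain ⟨hne', hii⟩ := hab'
  subst hii
  have hjj : j ≠ j' := fun hh => hne' (by rw [hh])
  simp only [Function.Embedding.coeFn_mk, f]
  by_cases h0 : j = 0
  · have h1 : j' ≠ 0 := fun hh => hjj (h0.trans hh.symm)
    rw [if_pos h0, if_neg h1]
    exact hadj _ (hmem i)
  · have h1 : j' = 0 := by
      by_contra h1
      exact hjj (by omega)
    rw [if_neg h0, if_pos h1]
    exact (hadj _ (hmem i)).symm



def pushSub {n m : ℕ} (G : SimpleGraph (Fin n)) (ψ : Fin n → Fin m) (G' : G.Subgraph) :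
    (⊤ : SimpleGraph (Fin m)).Subgraph where
  verts := ψ '' G'.verts
  Adj x y := x ≠ y ∧ ∃ a b, G'.Adj a b ∧ ψ a = x ∧ ψ b = y
  adj_sub h := h.1
  edge_vert := by
    rintro x y ⟨hne, a, b, hab, rfl, rfl⟩
    exact ⟨a, G'.edge_vert hab, rfl⟩
  symm := by
    constructor
    rintro x y ⟨hne, a, b, hab, rfl, rfl⟩
    exact ⟨hne.symm, b, a, G'.adj_symm hab, rfl, rfl⟩

@[simp] lemma pushSub_verts {n m : ℕ} (G : SimpleGraph (Fin n)) (ψ : Fin n → Fin m)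
    (G' : G.Subgraph) : (pushSub G ψ G').verts = ψ '' G'.verts := rfl

@[simp] lemma pushSub_adj {n m : ℕ} (G : SimpleGraph (Fin n)) (ψ : Fin n → Fin m)
    (G' : G.Subgraph) (x y : Fin m) :
    (pushSub G ψ G').Adj x y ↔ x ≠ y ∧ ∃ a b, G'.Adj a b ∧ ψ a = x ∧ ψ b = y := Iff.rfl

lemma upper {n s : ℕ} {α : Type*} [Fintype α] (H : SimpleGraph α) (hs : 1 ≤ s)
    (u : α) (hu : (H.neighborSet u).ncard = s - 1)
    (hdeg : ∀ v, v ≠ u → s ≤ (H.neighborSet v).ncard)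
    (hα : 2 ≤ Fintype.card α)
    (G : SimpleGraph (Fin n)) (hfree : _root_.Free (matchingGraph s) G) :
    _root_.copyCount H G ≤ _root_.copyCount H (⊤ : SimpleGraph (Fin (2 * s - 1))) := by
  classical
  -- t ≥ s + 1
  have hts : s + 1 ≤ Fintype.card α := by
    obtain ⟨v, hv⟩ := Fintype.exists_ne_of_one_lt_card (by omega) u
    have h1 : s ≤ (H.neighborSet v).ncard := hdeg v hv
    have h2 : (H.neighborSet v).toFinset ⊆ Finset.univ.erase v := by
      intro y hy
      simp only [Set.mem_toFinset, SimpleGraph.mem_neighborSet] at hy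
      exact Finset.mem_erase.mpr ⟨hy.ne', Finset.mem_univ y⟩
    have h3 := Finset.card_le_card h2
    rw [Finset.card_erase_of_mem (Finset.mem_univ v), Finset.card_univ] at h3
    rw [Set.ncard_eq_toFinset_card'] at h1
    omega
  -- maximum matching
  obtain ⟨M, hMat, hMmax⟩ : ∃ M, IsMat G M ∧ ∀ M', IsMat G M' → M'.card ≤ M.card := by
    obtain ⟨M, hM1, hM2⟩ := Finset.exists_max_image (Finset.univ.filter (IsMat G))
      Finset.card ⟨∅, by simp [IsMat]⟩
    exact ⟨M, (Finset.mem_filter.mp hM1).2,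
      fun M' hM' => hM2 M' (Finset.mem_filter.mpr ⟨Finset.mem_univ _, hM'⟩)⟩
  have hMs : M.card ≤ s - 1 := by
    by_contra hc
    exact hfree (contains_of_mat hMat (by omega))
  set W : Finset (Fin n) := M.biUnion (fun p => {p.1, p.2}) with hW
  have hmemW : ∀ x, x ∈ W ↔ ∃ p ∈ M, x = p.1 ∨ x = p.2 := by
    intro x
    simp [hW, Finset.mem_biUnion, Finset.mem_insert, Finset.mem_singleton]
  have hendW : ∀ p ∈ M, p.1 ∈ W ∧ p.2 ∈ W := by
    intro p hp
    exact ⟨(hmemW _).mpr ⟨p, hp, Or.inl rfl⟩, (hmemW _).mpr ⟨p, hp, Or.inr rfl⟩⟩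
  have hWcard : W.card ≤ 2 * s - 2 := by
    calc W.card ≤ ∑ p ∈ M, ({p.1, p.2} : Finset (Fin n)).card := Finset.card_biUnion_le
    _ ≤ ∑ _p ∈ M, 2 := Finset.sum_le_sum (fun p _ => Finset.card_insert_le _ _ |>.trans (by simp))
    _ = 2 * M.card := by rw [Finset.sum_const, smul_eq_mul, mul_comm]
    _ ≤ 2 * s - 2 := by omega
  have hcover : ∀ (S : Finset (Fin n)), (∀ y ∈ S, y ∈ W) →
      S.card ≤ ∑ p ∈ M, (S ∩ {p.1, p.2}).card := by
    intro S hSsub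
    have h1 : S ⊆ M.biUnion (fun p => S ∩ {p.1, p.2}) := by
      intro y hy
      have hyW := hSsub y hy
      obtain ⟨p, hp, hyp⟩ := (hmemW y).mp hyW
      refine Finset.mem_biUnion.mpr ⟨p, hp, Finset.mem_inter.mpr ⟨hy, ?_⟩⟩
      rcases hyp with h | h
      · exact Finset.mem_insert.mpr (Or.inl h)
      · exact Finset.mem_insert.mpr (Or.inr (Finset.mem_singleton.mpr h))
    exact (Finset.card_le_card h1).trans Finset.card_biUnion_le
  have hnotW_end : ∀ x, x ∉ W → ∀ p ∈ M, x ≠ p.1 ∧ x ≠ p.2 := by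
    intro x hx p hp
    have h := hendW p hp
    exact ⟨fun hh => hx (hh ▸ h.1), fun hh => hx (hh ▸ h.2)⟩
  have hunm : ∀ x y, x ∉ W → y ∉ W → ¬ G.Adj x y := by
    intro x y hx hy hadj
    obtain ⟨hmat', hcard'⟩ := mat_insert hMat hadj (hnotW_end x hx) (hnotW_end y hy)
    have := hMmax _ hmat'
    omega
  have hWof : ∀ {a : Fin n} {p}, p ∈ M → (a = p.1 ∨ a = p.2) → a ∈ W := by
    intro a p hp ha
    rcases ha with h | h
    · exact h ▸ (hendW p hp).1
    · exact h ▸ (hendW p hp).2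
  have hOther : ∀ {a : Fin n} {p q}, p ∈ M → q ∈ M → p ≠ q → (a = p.1 ∨ a = p.2) →
      a ≠ q.1 ∧ a ≠ q.2 := by
    intro a p q hp hq hne ha
    have h4 := hMat.2 p hp q hq hne
    rcases ha with h | h
    · subst h; exact ⟨h4.1, h4.2.1⟩
    · subst h; exact ⟨h4.2.2.1, h4.2.2.2⟩
  have hneOfW : ∀ {a x : Fin n}, a ∈ W → x ∉ W → a ≠ x ∧ x ≠ a := by
    intro a x ha hx
    constructor
    · intro hh; exact hx (hh ▸ ha)
    · intro hh; exact hx (hh ▸ ha)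
  have hex1 : ∀ p ∈ M, ∀ x1 x2 a b : Fin n, x1 ∉ W → x2 ∉ W → x1 ≠ x2 →
      (a = p.1 ∨ a = p.2) → (b = p.1 ∨ b = p.2) → a ≠ b →
      G.Adj x1 a → G.Adj x2 b → False := by
    intro p hp x1 x2 a b hx1 hx2 hx12 hamem hbmem hab had1 had2
    have haW : a ∈ W := hWof hp hamem
    have hbW : b ∈ W := hWof hp hbmem
    have hM1 : IsMat G (M.erase p) := mat_subset hMat (Finset.erase_subset _ _)
    have hx2e : ∀ r ∈ M.erase p, x2 ≠ r.1 ∧ x2 ≠ r.2 :=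
      fun r hr => hnotW_end x2 hx2 r (Finset.mem_of_mem_erase hr)
    have hbe : ∀ r ∈ M.erase p, b ≠ r.1 ∧ b ≠ r.2 := fun r hr =>
      hOther hp (Finset.mem_of_mem_erase hr) (Finset.ne_of_mem_erase hr).symm hbmem
    obtain ⟨hM2, hc2⟩ := mat_insert hM1 had2 hx2e hbe
    have hx1e : ∀ r ∈ insert (x2, b) (M.erase p), x1 ≠ r.1 ∧ x1 ≠ r.2 := by
      intro r hr
      rcases Finset.mem_insert.mp hr with h | h
      · subst h; exact ⟨hx12, (hneOfW hbW hx1).2⟩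
      · exact hnotW_end x1 hx1 r (Finset.mem_of_mem_erase h)
    have hae : ∀ r ∈ insert (x2, b) (M.erase p), a ≠ r.1 ∧ a ≠ r.2 := by
      intro r hr
      rcases Finset.mem_insert.mp hr with h | h
      · subst h; exact ⟨(hneOfW haW hx2).1, hab⟩
      · exact hOther hp (Finset.mem_of_mem_erase h) (Finset.ne_of_mem_erase h).symm hamem
    obtain ⟨hM3, hc3⟩ := mat_insert hM2 had1 hx1e hae
    have hle := hMmax _ hM3
    have hce := Finset.card_erase_of_mem hp
    have h1le := Finset.card_pos.mpr ⟨p, hp⟩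
    omega
  have hex2 : ∀ p ∈ M, ∀ q ∈ M, p ≠ q → ∀ x1 x2 a b c d : Fin n,
      x1 ∉ W → x2 ∉ W → x1 ≠ x2 →
      (a = p.1 ∨ a = p.2) → (b = p.1 ∨ b = p.2) → a ≠ b →
      (c = q.1 ∨ c = q.2) → (d = q.1 ∨ d = q.2) → c ≠ d →
      G.Adj x1 a → G.Adj b c → G.Adj x2 d → s - 1 ≤ M.card → False := by
    intro p hp q hq hpq x1 x2 a b c d hx1 hx2 hx12 hamem hbmem hab hcmem hdmem hcd
      had1 had2 had3 hscard
    have haW : a ∈ W := hWof hp hamem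
    have hbW : b ∈ W := hWof hp hbmem
    have hcW : c ∈ W := hWof hq hcmem
    have hdW : d ∈ W := hWof hq hdmem
    have hqmem : q ∈ M.erase p := Finset.mem_erase.mpr ⟨hpq.symm, hq⟩
    set M0 := (M.erase p).erase q with hM0def
    have hM0 : IsMat G M0 := mat_subset hMat ((Finset.erase_subset _ _).trans (Finset.erase_subset _ _))
    have hM0mem : ∀ r ∈ M0, r ∈ M ∧ r ≠ p ∧ r ≠ q := by
      intro r hr
      have h1 := Finset.ne_of_mem_erase hr
      have h2 := Finset.mem_of_mem_erase hr
      exact ⟨Finset.mem_of_mem_erase h2, Finset.ne_of_mem_erase h2, h1⟩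
    have hx2e : ∀ r ∈ M0, x2 ≠ r.1 ∧ x2 ≠ r.2 :=
      fun r hr => hnotW_end x2 hx2 r (hM0mem r hr).1
    have hde : ∀ r ∈ M0, d ≠ r.1 ∧ d ≠ r.2 := fun r hr =>
      hOther hq (hM0mem r hr).1 (hM0mem r hr).2.2.symm hdmem
    obtain ⟨hM1', hc1⟩ := mat_insert hM0 had3 hx2e hde
    have hPQ : ∀ {e f : Fin n}, (e = p.1 ∨ e = p.2) → (f = q.1 ∨ f = q.2) → e ≠ f := by
      intro e f he hf
      have h2 := hOther hp hq hpq he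
      rcases hf with h | h
      · subst h; exact h2.1
      · subst h; exact h2.2
    have hbe : ∀ r ∈ insert (x2, d) M0, b ≠ r.1 ∧ b ≠ r.2 := by
      intro r hr
      rcases Finset.mem_insert.mp hr with h | h
      · subst h; exact ⟨(hneOfW hbW hx2).1, hPQ hbmem hdmem⟩
      · exact hOther hp (hM0mem r h).1 (hM0mem r h).2.1.symm hbmem
    have hce : ∀ r ∈ insert (x2, d) M0, c ≠ r.1 ∧ c ≠ r.2 := by
      intro r hr
      rcases Finset.mem_insert.mp hr with h | h
      · subst h; exact ⟨(hneOfW hcW hx2).1, hcd⟩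
      · exact hOther hq (hM0mem r h).1 (hM0mem r h).2.2.symm hcmem
    obtain ⟨hM2', hc2⟩ := mat_insert hM1' had2 hbe hce
    have hx1e : ∀ r ∈ insert (b, c) (insert (x2, d) M0), x1 ≠ r.1 ∧ x1 ≠ r.2 := by
      intro r hr
      rcases Finset.mem_insert.mp hr with h | h
      · subst h; exact ⟨(hneOfW hbW hx1).2, (hneOfW hcW hx1).2⟩
      · rcases Finset.mem_insert.mp h with h' | h'
        · subst h'; exact ⟨hx12, (hneOfW hdW hx1).2⟩
        · exact hnotW_end x1 hx1 r (hM0mem r h').1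
    have hae : ∀ r ∈ insert (b, c) (insert (x2, d) M0), a ≠ r.1 ∧ a ≠ r.2 := by
      intro r hr
      rcases Finset.mem_insert.mp hr with h | h
      · subst h; exact ⟨hab, hPQ hamem hcmem⟩
      · rcases Finset.mem_insert.mp h with h' | h'
        · subst h'; exact ⟨(hneOfW haW hx2).1, hPQ hamem hdmem⟩
        · exact hOther hp (hM0mem r h').1 (hM0mem r h').2.1.symm hamem
    obtain ⟨hM3', hc3⟩ := mat_insert hM2' had1 hx1e hae
    have hcaM0 : M0.card = M.card - 2 := by
      rw [hM0def, Finset.card_erase_of_mem hqmem, Finset.card_erase_of_mem hp]; omega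
    have h2le : 2 ≤ M.card := Finset.one_lt_card.mpr ⟨p, hp, q, hq, hpq⟩
    exact hfree (contains_of_mat hM3' (by omega))
  -- ψ and star
  have hpos : 0 < 2 * s - 1 := by omega
  let star : Fin (2 * s - 1) := ⟨2 * s - 2, by omega⟩
  let eW : Fin W.card ≃o W := W.orderIsoOfFin rfl
  let ψ : Fin n → Fin (2 * s - 1) := fun v =>
    if h : v ∈ W then ⟨(eW.symm ⟨v, h⟩ : Fin W.card), by
      have := (eW.symm ⟨v, h⟩).isLt; omega⟩ else star
  have hψWlt : ∀ v, v ∈ W → (ψ v : ℕ) < 2 * s - 2 := by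
    intro v h
    simp only [ψ, dif_pos h]
    have := (eW.symm ⟨v, h⟩).isLt
    omega
  have hψn : ∀ v, v ∉ W → ψ v = star := fun v h => by simp only [ψ, dif_neg h]
  have hstarval : (star : ℕ) = 2 * s - 2 := rfl
  have hψne : ∀ v, v ∈ W → ψ v ≠ star := by
    intro v h hh
    have := hψWlt v h
    rw [hh, hstarval] at this
    omega
  have hψinj : ∀ v, v ∈ W → ∀ w, w ∈ W → ψ v = ψ w → v = w := by
    intro v hv w hw h
    simp only [ψ, dif_pos hv, dif_pos hw] at h
    have h2 : ((eW.symm ⟨v, hv⟩ : Fin W.card) : ℕ) = ((eW.symm ⟨w, hw⟩ : Fin W.card) : ℕ) :=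
      congrArg (fun z : Fin (2 * s - 1) => z.val) h
    have h3 := eW.symm.injective (Fin.ext h2)
    exact congrArg Subtype.val h3
  -- copy facts
  have copyFacts : ∀ (G' : G.Subgraph), Nonempty (H ≃g G'.coe) →
      G'.verts.toFinset.card = Fintype.card α ∧
      (∀ x ∈ G'.verts, s - 1 ≤ (Finset.univ.filter (fun y => G'.Adj x y)).card) ∧
      (∀ x ∈ G'.verts, (Finset.univ.filter (fun y => G'.Adj x y)).card ≤ s - 1 →
        ∀ y ∈ G'.verts, y ≠ x → s ≤ (Finset.univ.filter (fun y' => G'.Adj y y')).card) := by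
    intro G' hne
    obtain ⟨φ⟩ := hne
    have hdegv : ∀ v : α, (Finset.univ.filter (fun y => G'.Adj ((φ v : ↥G'.verts) : Fin n) y)).card
        = (H.neighborSet v).ncard := by
      intro v
      have key : {y : Fin n | G'.Adj ((φ v : ↥G'.verts) : Fin n) y}
          = Subtype.val '' (G'.coe.neighborSet (φ v)) := by
        ext y
        simp only [Set.mem_setOf_eq, Set.mem_image]
        constructor
        · intro h
          exact ⟨⟨y, G'.edge_vert (G'.adj_symm h)⟩, h, rfl⟩
        · rintro ⟨⟨y', hy'⟩, h, rfl⟩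
          exact h
      have h1 : (Finset.univ.filter (fun y => G'.Adj ((φ v : ↥G'.verts) : Fin n) y))
          = {y : Fin n | G'.Adj ((φ v : ↥G'.verts) : Fin n) y}.toFinset := by
        ext y; simp
      rw [h1, ← Set.ncard_eq_toFinset_card', key,
        Set.ncard_image_of_injective _ Subtype.val_injective]
      have e2 := (φ.mapNeighborSet v).symm
      rw [← Nat.card_coe_set_eq, ← Nat.card_coe_set_eq]
      exact Nat.card_congr e2
    have hpre : ∀ x (hx : x ∈ G'.verts), ∃ v : α, ((φ v : ↥G'.verts) : Fin n) = x := by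
      intro x hx
      exact ⟨φ.symm ⟨x, hx⟩, by simp⟩
    constructor
    · rw [← Set.ncard_eq_toFinset_card', ← Nat.card_coe_set_eq,
        ← Nat.card_eq_fintype_card]
      exact (Nat.card_congr φ.toEquiv).symm
    constructor
    · intro x hx
      obtain ⟨v, hv⟩ := hpre x hx
      rw [← hv, hdegv v]
      by_cases hvu : v = u
      · subst hvu; omega
      · have := hdeg v hvu; omega
    · intro x hx hxs y hy hyx
      obtain ⟨v, hv⟩ := hpre x hx
      obtain ⟨w, hw⟩ := hpre y hy
      have hvu : v = u := by
        by_contra hvu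
        have h1 := hdeg v hvu
        rw [← hv, hdegv v] at hxs
        omega
      have hwv : w ≠ v := by
        intro hh
        exact hyx (by rw [← hv, ← hw, hh])
      rw [← hw, hdegv w]
      exact hdeg w (hvu ▸ hwv)
  -- at most one external vertex per copy
  have hone : ∀ (G' : G.Subgraph), Nonempty (H ≃g G'.coe) →
      ∀ x1, x1 ∈ G'.verts → ∀ x2, x2 ∈ G'.verts → x1 ∉ W → x2 ∉ W → x1 = x2 := by
    intro G' hne x1 hx1 x2 hx2 hx1W hx2W
    by_contra hx12
    obtain ⟨hvc, hd1, hd2⟩ := copyFacts G' hne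
    set S1 := Finset.univ.filter (fun y => G'.Adj x1 y) with hS1
    set S2 := Finset.univ.filter (fun y => G'.Adj x2 y) with hS2
    have hadjG : ∀ x y, G'.Adj x y → G.Adj x y := fun x y h => G'.adj_sub h
    have hSW : ∀ y, (y ∈ S1 ∨ y ∈ S2) → y ∈ W := by
      intro y hy
      by_contra hyW
      rcases hy with hy | hy
      · exact hunm x1 y hx1W hyW (hadjG _ _ ((Finset.mem_filter.mp hy).2))
      · exact hunm x2 y hx2W hyW (hadjG _ _ ((Finset.mem_filter.mp hy).2))
    have hsum : 2 * s - 1 ≤ S1.card + S2.card := by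
      have h1 := hd1 x1 hx1
      have h2 := hd1 x2 hx2
      rw [← hS1] at h1
      rw [← hS2] at h2
      by_cases hc : S1.card ≤ s - 1
      · have h4 := hd2 x1 hx1 (by rw [← hS1]; exact hc) x2 hx2 (fun h => hx12 h.symm)
        rw [← hS2] at h4
        omega
      · omega
    have hkey : ∃ p ∈ M, 3 ≤ (S1 ∩ {p.1, p.2}).card + (S2 ∩ {p.1, p.2}).card := by
      by_contra hno
      push_neg at hno
      have hb1 := hcover S1 (fun y hy => hSW y (Or.inl hy))
      have hb2 := hcover S2 (fun y hy => hSW y (Or.inr hy))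
      have hsum2 : ∑ p ∈ M, ((S1 ∩ {p.1, p.2}).card + (S2 ∩ {p.1, p.2}).card) ≤ 2 * M.card := by
        calc ∑ p ∈ M, ((S1 ∩ {p.1, p.2}).card + (S2 ∩ {p.1, p.2}).card)
            ≤ ∑ _p ∈ M, 2 := Finset.sum_le_sum (fun p hp => by have := hno p hp; omega)
          _ = 2 * M.card := by rw [Finset.sum_const, smul_eq_mul, mul_comm]
      rw [Finset.sum_add_distrib] at hsum2
      omega
    obtain ⟨p, hp, h3⟩ := hkey
    have hppair : p.1 ≠ p.2 := (hMat.1 p hp).ne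
    have hpecard : ({p.1, p.2} : Finset (Fin n)).card = 2 := by
      rw [Finset.card_insert_of_notMem (by simp [hppair]), Finset.card_singleton]
    have hT1le : (S1 ∩ {p.1, p.2}).card ≤ 2 := hpecard ▸ Finset.card_le_card Finset.inter_subset_right
    have hT2le : (S2 ∩ {p.1, p.2}).card ≤ 2 := hpecard ▸ Finset.card_le_card Finset.inter_subset_right
    have hT1ne : (S1 ∩ {p.1, p.2}).Nonempty := Finset.card_pos.mp (by omega)
    have hT2ne : (S2 ∩ {p.1, p.2}).Nonempty := Finset.card_pos.mp (by omega)
    obtain ⟨a, ha⟩ := hT1ne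
    obtain ⟨b, hb'⟩ := hT2ne
    have hamem : a = p.1 ∨ a = p.2 := by
      have := (Finset.mem_inter.mp ha).2
      simpa using this
    have hbmem : b = p.1 ∨ b = p.2 := by
      have := (Finset.mem_inter.mp hb').2
      simpa using this
    have haS1 : G'.Adj x1 a := by
      have := (Finset.mem_inter.mp ha).1
      rw [hS1] at this
      exact (Finset.mem_filter.mp this).2
    have hbS2 : G'.Adj x2 b := by
      have := (Finset.mem_inter.mp hb').1
      rw [hS2] at this
      exact (Finset.mem_filter.mp this).2
    by_cases hab : a ≠ b
    · exact hex1 p hp x1 x2 a b hx1W hx2W hx12 hamem hbmem hab (hadjG _ _ haS1) (hadjG _ _ hbS2)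
    push_neg at hab
    have hcase : (S1 ∩ {p.1, p.2}).card = 2 ∨ (S2 ∩ {p.1, p.2}).card = 2 := by omega
    rcases hcase with hcc | hcc
    · have heq : S1 ∩ {p.1, p.2} = {p.1, p.2} :=
        Finset.eq_of_subset_of_card_le Finset.inter_subset_right (by omega)
      have hmem1 : p.1 ∈ S1 := by
        have h' : p.1 ∈ S1 ∩ {p.1, p.2} := by rw [heq]; simp
        exact (Finset.mem_inter.mp h').1
      have hmem2 : p.2 ∈ S1 := by
        have h' : p.2 ∈ S1 ∩ {p.1, p.2} := by rw [heq]; simp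
        exact (Finset.mem_inter.mp h').1
      have hadj1 : G'.Adj x1 p.1 := by rw [hS1] at hmem1; exact (Finset.mem_filter.mp hmem1).2
      have hadj2 : G'.Adj x1 p.2 := by rw [hS1] at hmem2; exact (Finset.mem_filter.mp hmem2).2
      rcases hbmem with haa | haa
      · exact hex1 p hp x1 x2 p.2 b hx1W hx2W hx12 (Or.inr rfl) (Or.inl haa)
          (by rw [haa]; exact hppair.symm) (hadjG _ _ hadj2) (hadjG _ _ hbS2)
      · exact hex1 p hp x1 x2 p.1 b hx1W hx2W hx12 (Or.inl rfl) (Or.inr haa)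
          (by rw [haa]; exact hppair) (hadjG _ _ hadj1) (hadjG _ _ hbS2)
    · have heq : S2 ∩ {p.1, p.2} = {p.1, p.2} :=
        Finset.eq_of_subset_of_card_le Finset.inter_subset_right (by omega)
      have hmem1 : p.1 ∈ S2 := by
        have h' : p.1 ∈ S2 ∩ {p.1, p.2} := by rw [heq]; simp
        exact (Finset.mem_inter.mp h').1
      have hmem2 : p.2 ∈ S2 := by
        have h' : p.2 ∈ S2 ∩ {p.1, p.2} := by rw [heq]; simp
        exact (Finset.mem_inter.mp h').1
      have hadj1 : G'.Adj x2 p.1 := by rw [hS2] at hmem1; exact (Finset.mem_filter.mp hmem1).2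
      have hadj2 : G'.Adj x2 p.2 := by rw [hS2] at hmem2; exact (Finset.mem_filter.mp hmem2).2
      rcases hamem with haa | haa
      · exact hex1 p hp x1 x2 a p.2 hx1W hx2W hx12 (Or.inl haa) (Or.inr rfl)
          (by rw [haa]; exact hppair) (hadjG _ _ haS1) (hadjG _ _ hadj2)
      · exact hex1 p hp x1 x2 a p.1 hx1W hx2W hx12 (Or.inr haa) (Or.inl rfl)
          (by rw [haa]; exact hppair.symm) (hadjG _ _ haS1) (hadjG _ _ hadj1)
  -- injectivity of ψ on the vertex set of a copy
  have hψinjV : ∀ (G' : G.Subgraph), Nonempty (H ≃g G'.coe) →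
      ∀ x, x ∈ G'.verts → ∀ y, y ∈ G'.verts → ψ x = ψ y → x = y := by
    intro G' hne x hx y hy h
    by_cases hxW : x ∈ W <;> by_cases hyW : y ∈ W
    · exact hψinj x hxW y hyW h
    · exact absurd (h.trans (hψn y hyW)) (hψne x hxW)
    · exact absurd (h.symm.trans (hψn x hxW)) (hψne y hyW)
    · exact hone G' hne x hx y hy hxW hyW
  have hadjne : ∀ (G' : G.Subgraph) (x y : Fin n), G'.Adj x y → x ≠ y :=
    fun G' x y h => (G'.adj_sub h).ne
  have hadjvert : ∀ (G' : G.Subgraph) (x y : Fin n), G'.Adj x y → x ∈ G'.verts ∧ y ∈ G'.verts :=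
    fun G' x y h => ⟨G'.edge_vert h, G'.edge_vert (G'.adj_symm h)⟩
  -- pushSub maps copies to copies
  have hmaps : ∀ (G' : G.Subgraph), Nonempty (H ≃g G'.coe) →
      Nonempty (H ≃g (pushSub G ψ G').coe) := by
    intro G' hne
    obtain ⟨φ⟩ := hne
    have hinjOn : Set.InjOn ψ G'.verts := fun x hx y hy h => hψinjV G' ⟨φ⟩ x hx y hy h
    let e : ↥G'.verts ≃ ↥((pushSub G ψ G').verts) := Equiv.Set.imageOfInjOn ψ G'.verts hinjOn
    refine ⟨RelIso.trans φ (RelIso.mk e ?_)⟩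
    rintro ⟨a, ha⟩ ⟨b, hb⟩
    show (pushSub G ψ G').coe.Adj (e ⟨a, ha⟩) (e ⟨b, hb⟩) ↔ G'.coe.Adj ⟨a, ha⟩ ⟨b, hb⟩
    have hev : ∀ (z : ↥G'.verts), ((e z : ↥((pushSub G ψ G').verts)) : Fin (2 * s - 1)) = ψ z :=
      fun z => rfl
    rw [SimpleGraph.Subgraph.coe_adj, SimpleGraph.Subgraph.coe_adj, hev, hev]
    simp only [pushSub_adj]
    constructor
    · rintro ⟨hne', a', b', hab, ha', hb'⟩
      have hav := hadjvert G' a' b' hab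
      have h1 : a' = a := hψinjV G' ⟨φ⟩ a' hav.1 a ha ha'
      have h2 : b' = b := hψinjV G' ⟨φ⟩ b' hav.2 b hb hb'
      rwa [h1, h2] at hab
    · intro h
      have hne2 : ψ a ≠ ψ b := fun hh => (hadjne G' a b h) (hψinjV G' ⟨φ⟩ a ha b hb hh)
      exact ⟨hne2, a, b, h, rfl, rfl⟩
  -- injectivity of pushSub on copies
  have hΦinj : ∀ (G1' : G.Subgraph), Nonempty (H ≃g G1'.coe) →
      ∀ (G2' : G.Subgraph), Nonempty (H ≃g G2'.coe) →
      pushSub G ψ G1' = pushSub G ψ G2' → G1' = G2' := by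
    intro G1' hne1 G2' hne2 heq
    have hv12 : ψ '' G1'.verts = ψ '' G2'.verts := by
      have := congrArg SimpleGraph.Subgraph.verts heq
      simpa using this
    have hA12 : ∀ x y, (pushSub G ψ G1').Adj x y ↔ (pushSub G ψ G2').Adj x y := by
      intro x y; rw [heq]
    have hWtrans : ∀ (Ga Gb : G.Subgraph),
        ψ '' Ga.verts = ψ '' Gb.verts → ∀ x, x ∈ Ga.verts → x ∈ W → x ∈ Gb.verts := by
      intro Ga Gb hab x hx hxW
      have h1 : ψ x ∈ ψ '' Gb.verts := by rw [← hab]; exact ⟨x, hx, rfl⟩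
      obtain ⟨y, hy, hyx⟩ := h1
      by_cases hyW : y ∈ W
      · rwa [hψinj y hyW x hxW hyx] at hy
      · exact absurd (hyx.symm.trans (hψn y hyW)) (hψne x hxW)
    have hAdjTrans : ∀ (Ga Gb : G.Subgraph) (hna : Nonempty (H ≃g Ga.coe))
        (hnb : Nonempty (H ≃g Gb.coe)), Ga.verts = Gb.verts →
        (∀ x y, (pushSub G ψ Ga).Adj x y → (pushSub G ψ Gb).Adj x y) →
        ∀ a b, Ga.Adj a b → Gb.Adj a b := by
      intro Ga Gb hna hnb hvv hAB a b h
      have hav := hadjvert Ga a b h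
      have hphi : (pushSub G ψ Ga).Adj (ψ a) (ψ b) :=
        ⟨fun hh => hadjne Ga a b h (hψinjV Ga hna a hav.1 b hav.2 hh), a, b, h, rfl, rfl⟩
      obtain ⟨hne', a', b', hab, ha', hb'⟩ := hAB _ _ hphi
      have hav2 := hadjvert Gb a' b' hab
      have h1 : a' = a := hψinjV Gb hnb a' hav2.1 a (hvv ▸ hav.1) ha'
      have h2 : b' = b := hψinjV Gb hnb b' hav2.2 b (hvv ▸ hav.2) hb'
      rwa [h1, h2] at hab
    by_cases hE1 : ∃ x, x ∈ G1'.verts ∧ x ∉ W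
    · obtain ⟨x1, hx1V, hx1W⟩ := hE1
      have hE2 : ∃ x, x ∈ G2'.verts ∧ x ∉ W := by
        have h1 : ψ x1 ∈ ψ '' G2'.verts := by rw [← hv12]; exact ⟨x1, hx1V, rfl⟩
        obtain ⟨y, hy, hyx⟩ := h1
        refine ⟨y, hy, fun hyW => ?_⟩
        exact (hψne y hyW) (hyx.trans (hψn x1 hx1W))
      obtain ⟨x2, hx2V, hx2W⟩ := hE2
      by_cases hx12 : x1 = x2
      · subst hx12
        have hvv : G1'.verts = G2'.verts := by
          ext z
          constructor
          · intro hz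
            by_cases hzW : z ∈ W
            · exact hWtrans G1' G2' hv12 z hz hzW
            · have hzx := hone G1' hne1 z hz x1 hx1V hzW hx1W
              rw [hzx]; exact hx2V
          · intro hz
            by_cases hzW : z ∈ W
            · exact hWtrans G2' G1' hv12.symm z hz hzW
            · have hzx := hone G2' hne2 z hz x1 hx2V hzW hx2W
              rw [hzx]; exact hx1V
        refine SimpleGraph.Subgraph.ext hvv ?_
        funext a b
        rw [eq_iff_iff]
        exact ⟨hAdjTrans G1' G2' hne1 hne2 hvv (fun x y h => (hA12 x y).mp h) a b,
          hAdjTrans G2' G1' hne2 hne1 hvv.symm (fun x y h => (hA12 x y).mpr h) a b⟩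
      · exfalso
        obtain ⟨hvc1, hd11, hd21⟩ := copyFacts G1' hne1
        set S := Finset.univ.filter (fun y => G1'.Adj x1 y) with hS
        have hSV : ∀ y, y ∈ S → G1'.Adj x1 y := fun y hy => (Finset.mem_filter.mp hy).2
        have hSmem : ∀ y, G1'.Adj x1 y → y ∈ S :=
          fun y h => Finset.mem_filter.mpr ⟨Finset.mem_univ _, h⟩
        have hSW : ∀ y, y ∈ S → y ∈ W := by
          intro y hy
          have h := hSV y hy
          have hyV := (hadjvert _ _ _ h).2
          by_contra hyW
          exact (hadjne _ _ _ h) (hone G1' hne1 x1 hx1V y hyV hx1W hyW)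
        have hS2 : ∀ y, y ∈ S ↔ G2'.Adj x2 y := by
          intro y
          constructor
          · intro hy
            have h := hSV y hy
            have hyW := hSW y hy
            have hphi : (pushSub G ψ G1').Adj (ψ x1) (ψ y) :=
              ⟨fun hh => (hψne y hyW) (hh.symm.trans (hψn x1 hx1W)), x1, y, h, rfl, rfl⟩
            obtain ⟨hne', a', b', hab, ha', hb'⟩ := (hA12 _ _).mp hphi
            have hav2 := hadjvert G2' a' b' hab
            have ha'W : a' ∉ W := fun hh => (hψne a' hh) (ha'.trans (hψn x1 hx1W))
            have ha'x2 : a' = x2 := hone G2' hne2 a' hav2.1 x2 hx2V ha'W hx2W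
            have hb'W : b' ∈ W := by
              by_contra hh
              exact (hψne y hyW) (hb'.symm.trans (hψn b' hh))
            have hb'y : b' = y := hψinj b' hb'W y hyW hb'
            rw [← ha'x2, ← hb'y]
            exact hab
          · intro h
            have hyV2 := (hadjvert _ _ _ h).2
            have hyW : y ∈ W := by
              by_contra hyW
              exact (hadjne _ _ _ h) (hone G2' hne2 x2 hx2V y hyV2 hx2W hyW)
            have hphi : (pushSub G ψ G2').Adj (ψ x2) (ψ y) :=
              ⟨fun hh => (hψne y hyW) (hh.symm.trans (hψn x2 hx2W)), x2, y, h, rfl, rfl⟩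
            obtain ⟨hne', a', b', hab, ha', hb'⟩ := (hA12 _ _).mpr hphi
            have hav1 := hadjvert G1' a' b' hab
            have ha'W : a' ∉ W := fun hh => (hψne a' hh) (ha'.trans (hψn x2 hx2W))
            have ha'x1 : a' = x1 := hone G1' hne1 a' hav1.1 x1 hx1V ha'W hx1W
            have hb'W : b' ∈ W := by
              by_contra hh
              exact (hψne y hyW) (hb'.symm.trans (hψn b' hh))
            have hb'y : b' = y := hψinj b' hb'W y hyW hb'
            apply hSmem
            rw [← ha'x1, ← hb'y]
            exact hab
        have hScardle : ∀ p ∈ M, (S ∩ {p.1, p.2}).card ≤ 1 := by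
          intro p hp
          by_contra hc
          push_neg at hc
          obtain ⟨y1, hy1, y2, hy2, hyne⟩ := Finset.one_lt_card.mp hc
          have hy1S := Finset.mem_inter.mp hy1
          have hy2S := Finset.mem_inter.mp hy2
          have hy1m : y1 = p.1 ∨ y1 = p.2 := by simpa using hy1S.2
          have hy2m : y2 = p.1 ∨ y2 = p.2 := by simpa using hy2S.2
          exact hex1 p hp x1 x2 y1 y2 hx1W hx2W hx12 hy1m hy2m hyne
            (G1'.adj_sub (hSV y1 hy1S.1)) (G2'.adj_sub ((hS2 y2).mp hy2S.1))
        have hcardS_le : S.card ≤ M.card := by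
          refine (hcover S hSW).trans ?_
          calc ∑ p ∈ M, (S ∩ {p.1, p.2}).card ≤ ∑ _p ∈ M, 1 :=
              Finset.sum_le_sum (fun p hp => hScardle p hp)
            _ = M.card := by simp
        have hcardS_ge : s - 1 ≤ S.card := by
          have h := hd11 x1 hx1V
          rwa [← hS] at h
        have hMeq : M.card = s - 1 := by omega
        have hSeq : S.card = s - 1 := by omega
        have hone_per_edge : ∀ p ∈ M, (S ∩ {p.1, p.2}).card = 1 := by
          intro p hp
          by_contra hc
          have h0 : (S ∩ {p.1, p.2}).card = 0 := by
            have := hScardle p hp; omega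
          have h1 : S.card ≤ ∑ q ∈ M, (S ∩ {q.1, q.2}).card := hcover S hSW
          have h2 : ∑ q ∈ M, (S ∩ {q.1, q.2}).card
              = (S ∩ {p.1, p.2}).card + ∑ q ∈ M.erase p, (S ∩ {q.1, q.2}).card :=
            (Finset.add_sum_erase M _ hp).symm
          have h3 : ∑ q ∈ M.erase p, (S ∩ {q.1, q.2}).card ≤ (M.erase p).card := by
            calc ∑ q ∈ M.erase p, (S ∩ {q.1, q.2}).card ≤ ∑ _q ∈ M.erase p, 1 :=
                Finset.sum_le_sum (fun q hq => hScardle q (Finset.mem_of_mem_erase hq))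
              _ = (M.erase p).card := by simp
          have h4 : (M.erase p).card = M.card - 1 := Finset.card_erase_of_mem hp
          have h5 := Finset.card_pos.mpr ⟨p, hp⟩
          omega
        -- the matched part of the copy
        set Af := G1'.verts.toFinset.erase x1 with hAf
        have hAfcard : s ≤ Af.card := by
          rw [hAf, Finset.card_erase_of_mem (Set.mem_toFinset.mpr hx1V), hvc1]
          omega
        have hAfV : ∀ y ∈ Af, y ∈ G1'.verts :=
          fun y hy => Set.mem_toFinset.mp (Finset.mem_of_mem_erase hy)
        have hAfW : ∀ y ∈ Af, y ∈ W := by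
          intro y hy
          by_contra hyW
          exact (Finset.ne_of_mem_erase hy)
            (hone G1' hne1 y (hAfV y hy) x1 hx1V hyW hx1W)
        -- choice of covering edges
        let fEdge : Fin n → Fin n × Fin n := fun y =>
          if h : y ∈ W then ((hmemW y).mp h).choose else (x1, x1)
        have hfEdge : ∀ y, ∀ h : y ∈ W, (fEdge y) ∈ M ∧ (y = (fEdge y).1 ∨ y = (fEdge y).2) := by
          intro y h
          have hsp := ((hmemW y).mp h).choose_spec
          simp only [fEdge, dif_pos h]
          exact hsp
        obtain ⟨a, haA, b, hbA, habne, habeq⟩ :=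
          Finset.exists_ne_map_eq_of_card_lt_of_maps_to
            (show M.card < Af.card by omega)
            (fun y hy => (hfEdge y (hAfW y hy)).1)
        set p := fEdge a with hpdef
        have hp : p ∈ M := (hfEdge a (hAfW a haA)).1
        have ham : a = p.1 ∨ a = p.2 := (hfEdge a (hAfW a haA)).2
        have hbm : b = p.1 ∨ b = p.2 := by
          have := (hfEdge b (hAfW b hbA)).2
          rwa [← habeq] at this
        have hcoverp : ∀ y, (y = p.1 ∨ y = p.2) → y = a ∨ y = b := by
          intro y hy
          rcases ham with h1 | h1 <;> rcases hbm with h2 | h2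
          · exact absurd (h1.trans h2.symm) habne
          · rcases hy with h | h
            · exact Or.inl (h.trans h1.symm)
            · exact Or.inr (h.trans h2.symm)
          · rcases hy with h | h
            · exact Or.inr (h.trans h2.symm)
            · exact Or.inl (h.trans h1.symm)
          · exact absurd (h1.trans h2.symm) habne
        -- exactly one of a, b is in S
        have hpcard := hone_per_edge p hp
        have hnotboth : ¬(a ∈ S ∧ b ∈ S) := by
          rintro ⟨h1, h2⟩
          have h3 : 2 ≤ (S ∩ {p.1, p.2}).card := by
            apply Finset.one_lt_card.mpr
            refine ⟨a, Finset.mem_inter.mpr ⟨h1, ?_⟩, b, Finset.mem_inter.mpr ⟨h2, ?_⟩, habne⟩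
            · rcases ham with h | h
              · exact Finset.mem_insert.mpr (Or.inl h)
              · exact Finset.mem_insert.mpr (Or.inr (Finset.mem_singleton.mpr h))
            · rcases hbm with h | h
              · exact Finset.mem_insert.mpr (Or.inl h)
              · exact Finset.mem_insert.mpr (Or.inr (Finset.mem_singleton.mpr h))
          omega
        have horone : a ∈ S ∨ b ∈ S := by
          obtain ⟨y0, hy0⟩ := Finset.card_pos.mp (show 0 < (S ∩ {p.1, p.2}).card by omega)
          have hy0S := (Finset.mem_inter.mp hy0).1
          have hy0m : y0 = p.1 ∨ y0 = p.2 := by simpa using (Finset.mem_inter.mp hy0).2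
          rcases hcoverp y0 hy0m with h | h
          · exact Or.inl (h ▸ hy0S)
          · exact Or.inr (h ▸ hy0S)
        obtain ⟨a0, b0, ha0S, hb0S, ha0m, hb0m, ha0A, hb0A, h00ne⟩ :
            ∃ a0 b0, a0 ∈ S ∧ b0 ∉ S ∧ (a0 = p.1 ∨ a0 = p.2) ∧ (b0 = p.1 ∨ b0 = p.2) ∧
              a0 ∈ Af ∧ b0 ∈ Af ∧ a0 ≠ b0 := by
          rcases horone with h1 | h1
          · exact ⟨a, b, h1, fun h2 => hnotboth ⟨h1, h2⟩, ham, hbm, haA, hbA, habne⟩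
          · exact ⟨b, a, h1, fun h2 => hnotboth ⟨h2, h1⟩, hbm, ham, hbA, haA, habne.symm⟩
        have hcoverp0 : ∀ y, (y = p.1 ∨ y = p.2) → y = a0 ∨ y = b0 := by
          intro y hy
          rcases ha0m with h1 | h1 <;> rcases hb0m with h2 | h2
          · exact absurd (h1.trans h2.symm) h00ne
          · rcases hy with h | h
            · exact Or.inl (h.trans h1.symm)
            · exact Or.inr (h.trans h2.symm)
          · rcases hy with h | h
            · exact Or.inr (h.trans h2.symm)
            · exact Or.inl (h.trans h1.symm)
          · exact absurd (h1.trans h2.symm) h00ne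
        -- neighbours of b0 other than a0
        have hb0V : b0 ∈ G1'.verts := hAfV b0 hb0A
        have hb0x1 : b0 ≠ x1 := Finset.ne_of_mem_erase hb0A
        set Nb := (Finset.univ.filter (fun y => G1'.Adj b0 y)).erase a0 with hNb
        have hNbcard : s - 1 ≤ Nb.card := by
          have h1 : s ≤ (Finset.univ.filter (fun y => G1'.Adj b0 y)).card :=
            hd21 x1 hx1V (by rw [← hS]; omega) b0 hb0V hb0x1
          have h2 := Finset.pred_card_le_card_erase
            (s := Finset.univ.filter (fun y => G1'.Adj b0 y)) (a := a0)
          rw [hNb]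
          omega
        have hNbprops : ∀ y ∈ Nb, G1'.Adj b0 y ∧ y ≠ a0 ∧ y ≠ b0 ∧ y ∈ W ∧ y ≠ x1 := by
          intro y hy
          have h1 : G1'.Adj b0 y := (Finset.mem_filter.mp (Finset.mem_of_mem_erase hy)).2
          have h2 : y ≠ a0 := Finset.ne_of_mem_erase hy
          have h3 : y ≠ b0 := (hadjne _ _ _ h1).symm
          have hyV : y ∈ G1'.verts := (hadjvert _ _ _ h1).2
          have h5 : y ≠ x1 := by
            intro hh
            subst hh
            exact hb0S (hSmem b0 (G1'.adj_symm h1))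
          have h4 : y ∈ W := by
            by_contra hyW
            exact h5 (hone G1' hne1 y hyV x1 hx1V hyW hx1W)
          exact ⟨h1, h2, h3, h4, h5⟩
        obtain ⟨c, hcN, d, hdN, hcd, hcdeq⟩ :=
          Finset.exists_ne_map_eq_of_card_lt_of_maps_to
            (show (M.erase p).card < Nb.card by
              rw [Finset.card_erase_of_mem hp]
              have := Finset.card_pos.mpr ⟨p, hp⟩
              omega)
            (f := fEdge)
            (fun y hy => by
              have hyW := (hNbprops y hy).2.2.2.1
              have hsp := hfEdge y hyW
              refine Finset.mem_erase.mpr ⟨?_, hsp.1⟩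
              intro hh
              rcases hcoverp0 y (by rw [← hh]; exact hsp.2) with h | h
              · exact (hNbprops y hy).2.1 h
              · exact (hNbprops y hy).2.2.1 h)
        set q := fEdge c with hqdef
        have hqM : q ∈ M.erase p := by
          have hyW := (hNbprops c hcN).2.2.2.1
          have hsp := hfEdge c hyW
          refine Finset.mem_erase.mpr ⟨?_, hsp.1⟩
          intro hh
          rcases hcoverp0 c (by rw [← hh]; exact hsp.2) with h | h
          · exact (hNbprops c hcN).2.1 h
          · exact (hNbprops c hcN).2.2.1 h
        have hq : q ∈ M := Finset.mem_of_mem_erase hqM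
        have hqp : q ≠ p := Finset.ne_of_mem_erase hqM
        have hcm : c = q.1 ∨ c = q.2 := (hfEdge c ((hNbprops c hcN).2.2.2.1)).2
        have hdm : d = q.1 ∨ d = q.2 := by
          have := (hfEdge d ((hNbprops d hdN).2.2.2.1)).2
          rwa [← hcdeq] at this
        have hcoverq : ∀ y, (y = q.1 ∨ y = q.2) → y = c ∨ y = d := by
          intro y hy
          rcases hcm with h1 | h1 <;> rcases hdm with h2 | h2
          · exact absurd (h1.trans h2.symm) hcd
          · rcases hy with h | h
            · exact Or.inl (h.trans h1.symm)
            · exact Or.inr (h.trans h2.symm)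
          · rcases hy with h | h
            · exact Or.inr (h.trans h2.symm)
            · exact Or.inl (h.trans h1.symm)
          · exact absurd (h1.trans h2.symm) hcd
        have hqcard := hone_per_edge q hq
        obtain ⟨y0, hy0⟩ := Finset.card_pos.mp (show 0 < (S ∩ {q.1, q.2}).card by omega)
        have hy0S := (Finset.mem_inter.mp hy0).1
        have hy0m : y0 = q.1 ∨ y0 = q.2 := by simpa using (Finset.mem_inter.mp hy0).2
        obtain ⟨c0, d0, hc0N, hd0S, hc0m, hd0m, hc0d0⟩ :
            ∃ c0 d0, c0 ∈ Nb ∧ d0 ∈ S ∧ (c0 = q.1 ∨ c0 = q.2) ∧ (d0 = q.1 ∨ d0 = q.2) ∧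
              c0 ≠ d0 := by
          rcases hcoverq y0 hy0m with h | h
          · refine ⟨d, y0, hdN, hy0S, hdm, hy0m, ?_⟩
            rw [h]
            exact hcd.symm
          · refine ⟨c, y0, hcN, hy0S, hcm, hy0m, ?_⟩
            rw [h]
            exact hcd
        exact hex2 p hp q hq hqp.symm x1 x2 a0 b0 c0 d0 hx1W hx2W hx12 ha0m hb0m h00ne
          hc0m hd0m hc0d0
          (G1'.adj_sub (hSV a0 ha0S))
          (G1'.adj_sub ((hNbprops c0 hc0N).1))
          (G2'.adj_sub ((hS2 d0).mp hd0S))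
          (by omega)
    · push_neg at hE1
      have hE2 : ∀ x, x ∈ G2'.verts → x ∈ W := by
        intro x hx
        by_contra hxW
        have h1 : ψ x ∈ ψ '' G1'.verts := by rw [hv12]; exact ⟨x, hx, rfl⟩
        obtain ⟨y, hy, hyx⟩ := h1
        have hyW := hE1 y hy
        exact (hψne y hyW) (hyx.trans (hψn x hxW))
      have hvv : G1'.verts = G2'.verts := by
        ext z
        constructor
        · intro hz; exact hWtrans G1' G2' hv12 z hz (hE1 z hz)
        · intro hz; exact hWtrans G2' G1' hv12.symm z hz (hE2 z hz)
      refine SimpleGraph.Subgraph.ext hvv ?_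
      funext a b
      rw [eq_iff_iff]
      exact ⟨hAdjTrans G1' G2' hne1 hne2 hvv (fun x y h => (hA12 x y).mp h) a b,
        hAdjTrans G2' G1' hne2 hne1 hvv.symm (fun x y h => (hA12 x y).mpr h) a b⟩
  show _root_.copyCount H G ≤ _root_.copyCount H (⊤ : SimpleGraph (Fin (2 * s - 1)))
  exact Set.ncard_le_ncard_of_injOn (pushSub G ψ)
    (fun G' hG' => hmaps G' hG')
    (fun G1' h1 G2' h2 heq => hΦinj G1' h1 G2' h2 heq)
    (Set.toFinite _)

def cliqueGraph (n s : ℕ) : SimpleGraph (Fin n) :=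
  SimpleGraph.fromRel (fun x y => (x : ℕ) < 2 * s - 1 ∧ (y : ℕ) < 2 * s - 1)

lemma matAdj (s : ℕ) (i : Fin s) : (matchingGraph s).Adj (i, 0) (i, 1) := by
  simp only [matchingGraph, SimpleGraph.fromRel_adj]
  refine ⟨?_, Or.inl trivial⟩
  intro h
  have := congrArg Prod.snd h
  simp at this

lemma freeSplit {n s : ℕ} (hs : 1 ≤ s) : _root_.Free (matchingGraph s) (splitGraph n (s - 1)) := by
  rintro ⟨f, hf⟩
  have hadj : ∀ i : Fin s, (splitGraph n (s - 1)).Adj (f (i, 0)) (f (i, 1)) :=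
    fun i => hf _ _ (matAdj s i)
  have hlt : ∀ i : Fin s, ((f (i, 0) : Fin n) : ℕ) < s - 1 ∨ ((f (i, 1) : Fin n) : ℕ) < s - 1 := by
    intro i
    have := hadj i
    simp only [splitGraph, SimpleGraph.fromRel_adj] at this
    tauto
  let g : Fin s → Fin n := fun i =>
    if ((f (i, 0) : Fin n) : ℕ) < s - 1 then f (i, 0) else f (i, 1)
  have hglt : ∀ i, ((g i : Fin n) : ℕ) < s - 1 := by
    intro i
    simp only [g]
    split
    · assumption
    · rcases hlt i with h | h
      · omega
      · exact h
  have hginj : Function.Injective g := by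
    intro i i' h
    by_contra hne
    simp only [g] at h
    have key : ∀ (j j' : Fin 2), f (i, j) ≠ f (i', j') := by
      intro j j' hh
      have := f.injective hh
      exact hne (congrArg Prod.fst this)
    split at h <;> split at h
    · exact key 0 0 h
    · exact key 0 1 h
    · exact key 1 0 h
    · exact key 1 1 h
  let g2 : Fin s → Fin (s - 1) := fun i => ⟨(g i : ℕ), hglt i⟩
  have hg2 : Function.Injective g2 := by
    intro i i' h
    apply hginj
    exact Fin.ext (congrArg (fun z : Fin (s - 1) => z.val) h)
  have := Fintype.card_le_of_injective g2 hg2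
  simp only [Fintype.card_fin] at this
  omega

lemma freeClique {n s : ℕ} (hs : 1 ≤ s) : _root_.Free (matchingGraph s) (cliqueGraph n s) := by
  rintro ⟨f, hf⟩
  have hadj : ∀ i : Fin s, (cliqueGraph n s).Adj (f (i, 0)) (f (i, 1)) :=
    fun i => hf _ _ (matAdj s i)
  have hlt : ∀ x : Fin s × Fin 2, ((f x : Fin n) : ℕ) < 2 * s - 1 := by
    rintro ⟨i, j⟩
    have := hadj i
    simp only [cliqueGraph, SimpleGraph.fromRel_adj] at this
    have h2 : ((f (i, 0) : Fin n) : ℕ) < 2 * s - 1 ∧ ((f (i, 1) : Fin n) : ℕ) < 2 * s - 1 := by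
      tauto
    have hj : j = 0 ∨ j = 1 := by omega
    rcases hj with h | h <;> rw [h]
    · exact h2.1
    · exact h2.2
  let g : Fin s × Fin 2 → Fin (2 * s - 1) := fun x => ⟨(f x : ℕ), hlt x⟩
  have hginj : Function.Injective g := by
    intro x y h
    exact f.injective (Fin.ext (congrArg (fun z : Fin (2 * s - 1) => z.val) h))
  have := Fintype.card_le_of_injective g hginj
  simp only [Fintype.card_prod, Fintype.card_fin] at this
  omega

lemma count_single {α β : Type*} [Fintype α] [Fintype β] (h1 : Fintype.card α = 1)
    (H : SimpleGraph α) (G : SimpleGraph β) : _root_.copyCount H G = Fintype.card β := by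
  classical
  obtain ⟨a0, ha0⟩ := Fintype.card_eq_one_iff.mp h1
  have hset : {G' : G.Subgraph | Nonempty (H ≃g G'.coe)}
      = Set.range (fun v => SimpleGraph.singletonSubgraph G v) := by
    ext G'
    simp only [Set.mem_setOf_eq, Set.mem_range]
    constructor
    · rintro ⟨φ⟩
      have hv : G'.verts.ncard = 1 := by
        rw [← Nat.card_coe_set_eq]
        rw [← Nat.card_congr φ.toEquiv, Nat.card_eq_fintype_card, h1]
      obtain ⟨v, hv⟩ := Set.ncard_eq_one.mp hv
      refine ⟨v, ?_⟩
      have hAdj : ∀ x y, ¬ G'.Adj x y := by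
        intro x y h
        have hx := G'.edge_vert h
        have hy := G'.edge_vert (G'.adj_symm h)
        rw [hv] at hx hy
        rw [Set.mem_singleton_iff] at hx hy
        subst hx; subst hy
        exact (G'.adj_sub h).ne rfl
      symm
      refine SimpleGraph.Subgraph.ext ?_ ?_
      · rw [hv]; rfl
      · funext x y
        rw [eq_iff_iff]
        simp only [SimpleGraph.singletonSubgraph_adj, Pi.bot_apply]
        exact ⟨fun h => hAdj x y h, False.elim⟩
    · rintro ⟨v, rfl⟩
      constructor
      refine RelIso.mk ⟨fun _ => ⟨v, rfl⟩, fun _ => a0, fun x => (ha0 x).symm,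
        fun y => Subtype.ext (by have := y.2; simpa using this.symm)⟩ ?_
      intro a b
      simp only [Equiv.coe_fn_mk]
      constructor
      · intro h
        exact absurd h (by simp [SimpleGraph.singletonSubgraph_adj])
      · intro h
        have ha := ha0 a
        have hb := ha0 b
        rw [ha, hb] at h
        exact absurd h H.irrefl
  rw [_root_.copyCount, hset]
  rw [← Nat.card_coe_set_eq]
  rw [Nat.card_congr (Equiv.ofInjective _ (fun v w h => by
    have := congrArg SimpleGraph.Subgraph.verts h
    simpa [SimpleGraph.singletonSubgraph] using this)).symm]
  exact Nat.card_eq_fintype_card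


/-- If every vertex of `H` has degree at least `s` except exactly one vertex of

degree `s - 1`, then for `n ≥ 2s - 1`,
`ex(n, H, M_s) = max {N(H, H(n,2s-1,s-1)), N(H, K_{2s-1})}`. -/
theorem stmt12 {α : Type*} [Fintype α] (H : SimpleGraph α) (s : ℕ) (hs : 1 ≤ s)
    (u : α) (hu : deg H u = s - 1) (hdeg : ∀ v, v ≠ u → s ≤ deg H v)
    (n : ℕ) (hn : 2 * s - 1 ≤ n) :
    exCount n H (matchingGraph s) =
      max (_root_.copyCount H (splitGraph n (s - 1)))
        (_root_.copyCount H (⊤ : SimpleGraph (Fin (2 * s - 1)))) := by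
  classical
  simp only [deg] at hu hdeg
  have hcard1 : 1 ≤ Fintype.card α := Fintype.card_pos_iff.mpr ⟨u⟩
  by_cases hone : Fintype.card α = 1
  · -- degenerate case : `H` is a single vertex and `s = 1`
    have hs1 : s = 1 := by
      have hN : H.neighborSet u = ∅ := by
        ext v
        simp only [SimpleGraph.mem_neighborSet, Set.mem_empty_iff_false, iff_false]
        intro h
        obtain ⟨a0, ha0⟩ := Fintype.card_eq_one_iff.mp hone
        exact h.ne ((ha0 u).trans (ha0 v).symm)
      rw [hN] at hu
      simp only [Set.ncard_empty] at hu
      omega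
    subst hs1
    have hcount : ∀ G : SimpleGraph (Fin n), _root_.copyCount H G = n := by
      intro G
      rw [count_single hone H G, Fintype.card_fin]
    have hcountK : _root_.copyCount H (⊤ : SimpleGraph (Fin (2 * 1 - 1))) = 1 := by
      rw [count_single hone H _, Fintype.card_fin]
    have hset : {N | ∃ G : SimpleGraph (Fin n), _root_.Free (matchingGraph 1) G ∧ N = _root_.copyCount H G}
        = {n} := by
      ext N
      simp only [Set.mem_setOf_eq, Set.mem_singleton_iff]
      constructor
      · rintro ⟨G, hfree, rfl⟩
        exact hcount G
      · rintro rfl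
        exact ⟨splitGraph _ 0, freeSplit le_rfl, (hcount _).symm⟩
    have hEx : exCount n H (matchingGraph 1) = n := by
      rw [exCount, hset, csSup_singleton]
    rw [hEx, hcount (splitGraph n (1 - 1)), hcountK]
    have h1n : 1 ≤ n := by omega
    omega
  · have hα : 2 ≤ Fintype.card α := by omega
    have hub : ∀ N ∈ {N | ∃ G : SimpleGraph (Fin n), _root_.Free (matchingGraph s) G ∧
        N = _root_.copyCount H G}, N ≤ max (_root_.copyCount H (splitGraph n (s - 1)))
          (_root_.copyCount H (⊤ : SimpleGraph (Fin (2 * s - 1)))) := by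
      rintro N ⟨G, hfree, rfl⟩
      exact le_trans (upper H hs u hu hdeg hα G hfree) (le_max_right _ _)
    have hbdd : BddAbove {N | ∃ G : SimpleGraph (Fin n), _root_.Free (matchingGraph s) G ∧
        N = _root_.copyCount H G} := ⟨_, hub⟩
    have hmem1 : _root_.copyCount H (splitGraph n (s - 1)) ∈
        {N | ∃ G : SimpleGraph (Fin n), _root_.Free (matchingGraph s) G ∧ N = _root_.copyCount H G} :=
      ⟨splitGraph n (s - 1), freeSplit hs, rfl⟩
    have hmem2 : _root_.copyCount H (cliqueGraph n s) ∈
        {N | ∃ G : SimpleGraph (Fin n), _root_.Free (matchingGraph s) G ∧ N = _root_.copyCount H G} :=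
      ⟨cliqueGraph n s, freeClique hs, rfl⟩
    have hc2le : _root_.copyCount H (⊤ : SimpleGraph (Fin (2 * s - 1)))
        ≤ _root_.copyCount H (cliqueGraph n s) := by
      apply copyCount_mono H (Fin.castLE (show 2 * s - 1 ≤ n by omega))
      · exact Fin.castLE_injective _
      · intro a b hab
        simp only [SimpleGraph.top_adj] at hab
        simp only [cliqueGraph, SimpleGraph.fromRel_adj]
        exact ⟨fun hh => hab (Fin.castLE_injective _ hh),
          Or.inl ⟨by simpa using a.isLt, by simpa using b.isLt⟩⟩
    rw [exCount]
    apply le_antisymm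
    · exact csSup_le ⟨_, hmem1⟩ hub
    · apply max_le
      · exact le_csSup hbdd hmem1
      · exact le_trans hc2le (le_csSup hbdd hmem2)
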